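/- arXiv:1706.04182 — 2 statements merged into one kernel-verified Lean document; each statement's English description precedes it below -/
import Mathlib

section
/- Let $M$ follow the non-central chi-squared distribution $\chi^2_p(\lambda)$ with c.d.f. $F_M$. Then as $a \downarrow 0$, the conditional expectation satisfies $E(M \mid M < a) \sim pa/(p+2)$. -/
/-!
On `y > 0` the density of `χ²_p(λ)` factors as `y ^ (p/2 - 1) * g y`, where the Poisson mixture `g`
converges uniformly on `[0, 1]` (the Gamma factors only grow) and so is continuous with
`g 0 > 0`. Substituting `y = a t`, dominated convergence gives
`∫₀ᵃ y ^ (r - 1) g y dy ~ g 0 · a ^ r / r` for every `r > 0`. Taking `r = p/2` for the c.d.f. and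
`r = p/2 + 1` for the first moment, their ratio is `~ a (p/2) / (p/2 + 1) = p a / (p + 2)`.
-/

open MeasureTheory Filter

/-- The p.d.f. of the chi-squared distribution with (real) degrees of freedom `d`. -/
noncomputable def chiSqPDF (d : ℝ) (y : ℝ) : ℝ :=
  y ^ (d/2 - 1) * Real.exp (-y/2) / (2 ^ (d/2) * Real.Gamma (d/2))

/-- The p.d.f. of the non-central chi-squared distribution `χ²_p(lam)`, via the
Poisson mixture representation. -/
noncomputable def ncChiSqPDF (p : ℕ) (lam : ℝ) (y : ℝ) : ℝ :=
  ∑' k : ℕ, Real.exp (-lam/2) * (lam/2) ^ k / (Nat.factorial k) * chiSqPDF ((p : ℝ) + 2 * k) y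

/-- The c.d.f. of the non-central chi-squared distribution `χ²_p(lam)`. -/
noncomputable def ncChiSqCDF (p : ℕ) (lam : ℝ) (a : ℝ) : ℝ :=
  ∫ y in (0:ℝ)..a, ncChiSqPDF p lam y

/-- `E(M ∣ M < a) = (∫_0^a y dF_M(y)) / F_M(a)` for `M ~ χ²_p(lam)`. -/
noncomputable def ncChiSqCondExp (p : ℕ) (lam : ℝ) (a : ℝ) : ℝ :=
  (∫ y in (0:ℝ)..a, y * ncChiSqPDF p lam y) / ncChiSqCDF p lam a

open Set Topology
open scoped Nat

theorem Real.Gamma_le_two_pow_mul_Gamma_add {x : ℝ} (hx : 1 / 2 ≤ x) (k : ℕ) :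
    Real.Gamma x ≤ 2 ^ k * Real.Gamma (x + k) := by
  induction k with
  | zero => simp
  | succ k ih =>
    have hxk : 0 < x + k := by positivity
    have hstep : Real.Gamma (x + ↑(k + 1)) = (x + k) * Real.Gamma (x + k) := by
      rw [Nat.cast_succ, ← add_assoc, Real.Gamma_add_one hxk.ne']
    have hΓ : 0 ≤ 2 ^ k * Real.Gamma (x + k) := by positivity [Real.Gamma_pos_of_pos hxk]
    calc Real.Gamma x ≤ 2 ^ k * Real.Gamma (x + k) := ih
      _ ≤ 2 * (x + k) * (2 ^ k * Real.Gamma (x + k)) :=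
        le_mul_of_one_le_left hΓ (by linarith [(Nat.cast_nonneg k : (0 : ℝ) ≤ k)])
      _ = 2 ^ (k + 1) * Real.Gamma (x + ↑(k + 1)) := by rw [hstep]; ring

section RpowWeightedIntegral

variable {g : ℝ → ℝ} {r : ℝ}

theorem intervalIntegral_rpow_mul_eq_rpow_mul_integral_comp {a : ℝ} (ha : 0 < a) :
    ∫ y in 0..a, y ^ (r - 1) * g y = a ^ r * ∫ t in 0..1, t ^ (r - 1) * g (a * t) := by
  have hsub := intervalIntegral.integral_comp_mul_left (fun y => y ^ (r - 1) * g y) ha.ne'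
    (a := 0) (b := 1)
  have hfactor : ∫ t in 0..1, (a * t) ^ (r - 1) * g (a * t)
      = a ^ (r - 1) * ∫ t in 0..1, t ^ (r - 1) * g (a * t) := by
    rw [← intervalIntegral.integral_const_mul]
    refine intervalIntegral.integral_congr fun t ht => ?_
    have ht0 : 0 ≤ t := by rw [uIcc_of_le zero_le_one] at ht; exact ht.1
    simp only [Real.mul_rpow ha.le ht0, mul_assoc]
  rw [mul_zero, mul_one, hfactor, Real.rpow_sub_one ha.ne', smul_eq_mul] at hsub
  field_simp at hsub
  linarith

theorem tendsto_integral_rpow_mul_comp_mul (hr : 0 < r) (hg : ContinuousOn g (Icc 0 1)) :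
    Tendsto (fun a => ∫ t in 0..1, t ^ (r - 1) * g (a * t)) (𝓝[>] 0) (𝓝 (g 0 / r)) := by
  obtain ⟨M, hM⟩ := isCompact_Icc.exists_bound_of_continuousOn hg
  have hsmall : ∀ᶠ a in 𝓝[>] (0 : ℝ), a ∈ Ioc 0 1 := Ioc_mem_nhdsGT zero_lt_one
  have hmaps : ∀ a ∈ Ioc (0 : ℝ) 1, MapsTo (a * ·) (Icc 0 1) (Icc 0 1) := fun a ha t ht =>
    ⟨mul_nonneg ha.1.le ht.1, mul_le_one₀ ha.2 ht.1 ht.2⟩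
  have hlimit : ∫ t in (0 : ℝ)..1, t ^ (r - 1) * g 0 = g 0 / r := by
    rw [intervalIntegral.integral_mul_const, integral_rpow (Or.inl (by linarith))]
    rw [sub_add_cancel, Real.one_rpow, Real.zero_rpow hr.ne', sub_zero]
    ring
  rw [← hlimit]
  refine intervalIntegral.tendsto_integral_filter_of_dominated_convergence
    (fun t => t ^ (r - 1) * M) ?_ ?_ ?_ ?_
  · filter_upwards [hsmall] with a ha
    rw [uIoc_of_le zero_le_one]
    refine ContinuousOn.aestronglyMeasurable ?_ measurableSet_Ioc
    exact (continuousOn_id.rpow_const fun t ht => Or.inl ht.1.ne').mul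
      ((hg.comp (continuousOn_const.mul continuousOn_id) (hmaps a ha)).mono Ioc_subset_Icc_self)
  · filter_upwards [hsmall] with a ha
    refine ae_of_all _ fun t ht => ?_
    rw [uIoc_of_le zero_le_one] at ht
    rw [norm_mul, Real.norm_of_nonneg (Real.rpow_nonneg ht.1.le _)]
    exact mul_le_mul_of_nonneg_left (hM _ (hmaps a ha (Ioc_subset_Icc_self ht)))
      (Real.rpow_nonneg ht.1.le _)
  · exact (intervalIntegral.intervalIntegrable_rpow' (by linarith)).mul_const M
  · refine ae_of_all _ fun t ht => ?_
    rw [uIoc_of_le zero_le_one] at ht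
    refine tendsto_const_nhds.mul ?_
    have hscale : Tendsto (· * t) (𝓝[>] 0) (𝓝[Icc 0 1] 0) := by
      refine tendsto_nhdsWithin_iff.2 ⟨?_, ?_⟩
      · simpa using ((continuous_mul_const t).tendsto 0).mono_left nhdsWithin_le_nhds
      · filter_upwards [hsmall] with a ha
        exact hmaps a ha (Ioc_subset_Icc_self ht)
    exact (hg.continuousWithinAt (left_mem_Icc.2 zero_le_one)).tendsto.comp hscale

theorem tendsto_intervalIntegral_rpow_mul_div_rpow (hr : 0 < r) (hg : ContinuousOn g (Icc 0 1)) :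
    Tendsto (fun a => (∫ y in 0..a, y ^ (r - 1) * g y) / a ^ r) (𝓝[>] 0) (𝓝 (g 0 / r)) := by
  refine (tendsto_integral_rpow_mul_comp_mul hr hg).congr' ?_
  filter_upwards [self_mem_nhdsWithin] with a (ha : 0 < a)
  rw [intervalIntegral_rpow_mul_eq_rpow_mul_integral_comp ha,
    mul_div_cancel_left₀ _ (Real.rpow_pos_of_pos ha r).ne']

end RpowWeightedIntegral

noncomputable def ncChiSqPDFRegularPart (p : ℕ) (lam y : ℝ) : ℝ :=
  ∑' k : ℕ, Real.exp (-lam / 2) * (lam / 2) ^ k / k ! *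
    (y ^ k * Real.exp (-y / 2) / (2 ^ ((p : ℝ) / 2 + k) * Real.Gamma ((p : ℝ) / 2 + k)))

theorem ncChiSqPDF_eq_rpow_mul_regularPart (p : ℕ) (lam : ℝ) {y : ℝ} (hy : 0 < y) :
    ncChiSqPDF p lam y = y ^ ((p : ℝ) / 2 - 1) * ncChiSqPDFRegularPart p lam y := by
  rw [ncChiSqPDF, ncChiSqPDFRegularPart, ← tsum_mul_left]
  refine tsum_congr fun k => ?_
  have hhalf : ((p : ℝ) + 2 * k) / 2 = (p : ℝ) / 2 + k := by ring
  rw [chiSqPDF, hhalf, add_sub_right_comm, Real.rpow_add hy, Real.rpow_natCast]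
  ring

section RegularPart

variable {p : ℕ} (hp : 1 ≤ p) (lam : ℝ)
include hp

theorem norm_ncChiSqPDFRegularPart_term_le (k : ℕ) {y : ℝ} (hy : y ∈ Icc (0 : ℝ) 1) :
    ‖Real.exp (-lam / 2) * (lam / 2) ^ k / k ! *
      (y ^ k * Real.exp (-y / 2) / (2 ^ ((p : ℝ) / 2 + k) * Real.Gamma ((p : ℝ) / 2 + k)))‖
    ≤ Real.exp (-lam / 2) / (2 ^ ((p : ℝ) / 2) * Real.Gamma ((p : ℝ) / 2)) *
      (‖lam / 2‖ ^ k / k !) := by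
  have hp2 : (1 : ℝ) / 2 ≤ p / 2 := by
    have : (1 : ℝ) ≤ p := by exact_mod_cast hp
    linarith
  have hΓ : 0 < Real.Gamma ((p : ℝ) / 2) := Real.Gamma_pos_of_pos (by linarith)
  have hfactor : y ^ k * Real.exp (-y / 2) ≤ 1 :=
    mul_le_one₀ (pow_le_one₀ hy.1 hy.2) (Real.exp_nonneg _)
      (Real.exp_le_one_iff.2 (by linarith [hy.1]))
  have hden : 2 ^ ((p : ℝ) / 2) * Real.Gamma ((p : ℝ) / 2)
      ≤ 2 ^ ((p : ℝ) / 2 + k) * Real.Gamma ((p : ℝ) / 2 + k) := by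
    rw [Real.rpow_add two_pos, Real.rpow_natCast, mul_assoc]
    gcongr
    exact Real.Gamma_le_two_pow_mul_Gamma_add hp2 k
  have hterm : 0 ≤ y ^ k * Real.exp (-y / 2) /
      (2 ^ ((p : ℝ) / 2 + k) * Real.Gamma ((p : ℝ) / 2 + k)) := by
    have hD : 0 < 2 ^ ((p : ℝ) / 2 + k) * Real.Gamma ((p : ℝ) / 2 + k) :=
      (by positivity : (0 : ℝ) < 2 ^ ((p : ℝ) / 2) * Real.Gamma ((p : ℝ) / 2)).trans_le hden
    exact div_nonneg (mul_nonneg (pow_nonneg hy.1 k) (Real.exp_nonneg _)) hD.le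
  rw [norm_mul, Real.norm_of_nonneg hterm, norm_div, norm_mul, norm_pow,
    Real.norm_of_nonneg (Real.exp_nonneg _), Real.norm_natCast]
  calc Real.exp (-lam / 2) * ‖lam / 2‖ ^ k / k ! *
        (y ^ k * Real.exp (-y / 2) / (2 ^ ((p : ℝ) / 2 + k) * Real.Gamma ((p : ℝ) / 2 + k)))
      ≤ Real.exp (-lam / 2) * ‖lam / 2‖ ^ k / k ! *
        (1 / (2 ^ ((p : ℝ) / 2) * Real.Gamma ((p : ℝ) / 2))) :=
        mul_le_mul_of_nonneg_left (div_le_div₀ zero_le_one hfactor (by positivity) hden)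
          (by positivity)
    _ = _ := by ring

theorem continuousOn_ncChiSqPDFRegularPart :
    ContinuousOn (ncChiSqPDFRegularPart p lam) (Icc 0 1) := by
  refine continuousOn_tsum (fun k => Continuous.continuousOn ?_)
    ((Real.summable_pow_div_factorial _).mul_left _)
    (fun k y hy => norm_ncChiSqPDFRegularPart_term_le hp lam k hy)
  have hΓ : 0 < Real.Gamma ((p : ℝ) / 2 + k) := Real.Gamma_pos_of_pos (by
    have : (1 : ℝ) ≤ p := by exact_mod_cast hp
    positivity)
  fun_prop (disch := positivity)

theorem ncChiSqPDFRegularPart_zero_pos : 0 < ncChiSqPDFRegularPart p lam 0 := by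
  have hΓ : 0 < Real.Gamma ((p : ℝ) / 2) := Real.Gamma_pos_of_pos (by
    have : (1 : ℝ) ≤ p := by exact_mod_cast hp
    positivity)
  rw [ncChiSqPDFRegularPart, tsum_eq_single 0 fun k hk => by simp [zero_pow hk]]
  simp only [pow_zero, Nat.factorial_zero, Nat.cast_one, div_one, mul_one, neg_zero, zero_div,
    Real.exp_zero, Nat.cast_zero, add_zero]
  positivity

end RegularPart

theorem ncChiSq_condExp_asymptotic_general (p : ℕ) (hp : 1 ≤ p) (lam : ℝ) :
    Tendsto (fun a : ℝ => ncChiSqCondExp p lam a / ((p : ℝ) * a / ((p : ℝ) + 2)))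
      (nhdsWithin 0 (Set.Ioi 0)) (nhds 1) := by
  set r : ℝ := (p : ℝ) / 2 with hr_def
  have hr : 0 < r := by positivity
  set g := ncChiSqPDFRegularPart p lam
  have hg : ContinuousOn g (Icc 0 1) := continuousOn_ncChiSqPDFRegularPart hp lam
  have hg0 : g 0 ≠ 0 := (ncChiSqPDFRegularPart_zero_pos hp lam).ne'
  have hden := tendsto_intervalIntegral_rpow_mul_div_rpow hr hg
  have hnum := tendsto_intervalIntegral_rpow_mul_div_rpow (by positivity : 0 < r + 1) hg
  have hlim : g 0 / (r + 1) / (g 0 / r) * ((r + 1) / r) = 1 := by field_simp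
  rw [← hlim]
  refine ((hnum.div hden (by positivity)).mul_const _).congr' ?_
  filter_upwards [self_mem_nhdsWithin] with a (ha : 0 < a)
  have hpdf : ∀ᵐ y, y ∈ uIoc 0 a → ncChiSqPDF p lam y = y ^ (r - 1) * g y :=
    ae_of_all _ fun y hy => ncChiSqPDF_eq_rpow_mul_regularPart p lam (uIoc_of_le ha.le ▸ hy).1
  have hCDF : ncChiSqCDF p lam a = ∫ y in 0..a, y ^ (r - 1) * g y :=
    intervalIntegral.integral_congr_ae hpdf
  have hmoment : ∫ y in 0..a, y * ncChiSqPDF p lam y = ∫ y in 0..a, y ^ (r + 1 - 1) * g y := by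
    refine intervalIntegral.integral_congr_ae (hpdf.mono fun y hy hya => ?_)
    have hy0 : y ≠ 0 := (uIoc_of_le ha.le ▸ hya).1.ne'
    rw [hy hya, add_sub_cancel_right, Real.rpow_sub_one hy0]
    field_simp
  simp only [Pi.div_apply]
  have hp_eq : (p : ℝ) = 2 * r := by rw [hr_def]; ring
  rw [ncChiSqCondExp, hCDF, hmoment, hp_eq, Real.rpow_add_one ha.ne']
  have har : 0 < a ^ r := Real.rpow_pos_of_pos ha r
  by_cases hD : ∫ y in 0..a, y ^ (r - 1) * g y = 0
  · simp [hD]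
  · field_simp

/-- As `a ↓ 0`, `E(M ∣ M < a) ~ p a / (p + 2)` for `M ~ χ²_p(λ)`. -/
theorem ncChiSq_condExp_asymptotic (p : ℕ) (hp : 1 ≤ p) (lam : ℝ) (hlam : 0 ≤ lam) :
    Tendsto (fun a : ℝ => ncChiSqCondExp p lam a / ((p : ℝ) * a / ((p : ℝ) + 2)))
      (nhdsWithin 0 (Set.Ioi 0)) (nhds 1) :=
  ncChiSq_condExp_asymptotic_general p hp lam
end

section
/- Let $Y_1, Y_2$ be independent standard normal random variables and $\alpha_1, \alpha_2 > 0$. Then $\lim_{c \downarrow 0} E\left(Y_1^2 \mid (\alpha_1 Y_1 + \alpha_2 Y_2)^2 < c\right) = \alpha_2^2/(\alpha_1^2 + \alpha_2^2)$. -/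
/-!
Put `S = α₁Y₁ + α₂Y₂`, `T = α₂Y₁ - α₁Y₂` and `r = α₁² + α₂²`. The pair `(S, T)` is Gaussian with
zero covariance, so `S` and `T` are independent, `Var T = r`, and `Y₁ = (α₁S + α₂T)/r`.
Expanding the square on `{S² < c}`, independence kills the cross term and turns the `T²` term
into `r · P(S² < c)`, so `E(Y₁² | S² < c) = (α₁/r)² E(S² | S² < c) + α₂²/r`, where
`0 ≤ E(S² | S² < c) ≤ c`.
-/

open MeasureTheory ProbabilityTheory Filter Topology

namespace ProbabilityTheory

variable {Ω : Type*} [MeasurableSpace Ω] {μ : Measure Ω}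

-- No positivity of `μ {X² < c}` is needed: where it vanishes, the quotient is `0`.
lemma tendsto_setIntegral_sq_div_measureReal_sq_lt [IsFiniteMeasure μ] (X : Ω → ℝ) :
    Tendsto (fun c : ℝ ↦ (∫ ω in {ω | X ω ^ 2 < c}, X ω ^ 2 ∂μ) / μ.real {ω | X ω ^ 2 < c})
      (𝓝[>] 0) (𝓝 0) := by
  have hbound : ∀ c, ‖(∫ ω in {ω | X ω ^ 2 < c}, X ω ^ 2 ∂μ) / μ.real {ω | X ω ^ 2 < c}‖
      ≤ |c| := by
    intro c
    have h := norm_setIntegral_le_of_norm_le_const (measure_lt_top μ {ω | X ω ^ 2 < c})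
      (f := fun ω ↦ X ω ^ 2) (C := |c|) fun ω hω ↦ by
        simpa [abs_of_nonneg (sq_nonneg (X ω))] using hω.le.trans (le_abs_self c)
    rw [norm_div, Real.norm_of_nonneg measureReal_nonneg]
    exact div_le_of_le_mul₀ measureReal_nonneg (abs_nonneg c) h
  refine squeeze_zero_norm hbound ?_
  simpa using (continuous_abs.tendsto (0 : ℝ)).mono_left nhdsWithin_le_nhds

lemma IndepFun.covariance_linComb [IsFiniteMeasure μ] {X Y : Ω → ℝ} (hXY : IndepFun X Y μ)
    (hX : MemLp X 2 μ) (hY : MemLp Y 2 μ) (a b c d : ℝ) :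
    cov[fun ω ↦ a * X ω + b * Y ω, fun ω ↦ c * X ω + d * Y ω; μ]
      = a * c * Var[X; μ] + b * d * Var[Y; μ] := by
  change cov[(fun ω ↦ a * X ω) + (fun ω ↦ b * Y ω), (fun ω ↦ c * X ω) + (fun ω ↦ d * Y ω); μ] = _
  rw [covariance_add_left (hX.const_mul a) (hY.const_mul b)
      ((hX.const_mul c).add (hY.const_mul d)),
    covariance_add_right (hX.const_mul a) (hX.const_mul c) (hY.const_mul d),
    covariance_add_right (hY.const_mul b) (hX.const_mul c) (hY.const_mul d)]
  simp only [covariance_const_mul_left, covariance_const_mul_right,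
    covariance_self hX.aemeasurable, covariance_self hY.aemeasurable,
    hXY.covariance_eq_zero hX hY, hXY.symm.covariance_eq_zero hY hX]
  ring

lemma HasGaussianLaw.prod_linComb {X Y : Ω → ℝ}
    (hXY : HasGaussianLaw (fun ω ↦ (X ω, Y ω)) μ) (a b c d : ℝ) :
    HasGaussianLaw (fun ω ↦ (a * X ω + b * Y ω, c * X ω + d * Y ω)) μ := by
  simpa using hXY.map_fun
    ((a • ContinuousLinearMap.fst ℝ ℝ ℝ + b • ContinuousLinearMap.snd ℝ ℝ ℝ).prod
      (c • ContinuousLinearMap.fst ℝ ℝ ℝ + d • ContinuousLinearMap.snd ℝ ℝ ℝ))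

lemma IndepFun.indepFun_linComb_of_hasGaussianLaw {X Y : Ω → ℝ}
    (hX : HasGaussianLaw X μ) (hY : HasGaussianLaw Y μ) (hXY : IndepFun X Y μ) {a b c d : ℝ}
    (horth : a * c * Var[X; μ] + b * d * Var[Y; μ] = 0) :
    IndepFun (fun ω ↦ a * X ω + b * Y ω) (fun ω ↦ c * X ω + d * Y ω) μ := by
  have := hX.isProbabilityMeasure
  refine ((hXY.hasGaussianLaw hX hY).prod_linComb a b c d).indepFun_of_covariance_eq_zero ?_
  rwa [hXY.covariance_linComb hX.memLp_two hY.memLp_two]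

lemma HasGaussianLaw.measure_sq_lt_ne_zero {X : Ω → ℝ} (hX : HasGaussianLaw X μ)
    (hvar : Var[X; μ] ≠ 0) {c : ℝ} (hc : 0 < c) : μ {ω | X ω ^ 2 < c} ≠ 0 := by
  have hv : Var[X; μ].toNNReal ≠ 0 := by
    simpa using lt_of_le_of_ne (variance_nonneg X μ) (Ne.symm hvar)
  have hB : MeasurableSet {x : ℝ | x ^ 2 < c} := measurableSet_lt (by fun_prop) (by fun_prop)
  have hB0 : volume {x : ℝ | x ^ 2 < c} ≠ 0 :=
    (isOpen_lt (by fun_prop) (by fun_prop)).measure_ne_zero volume ⟨0, by simpa using hc⟩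
  rw [show {ω | X ω ^ 2 < c} = X ⁻¹' {x | x ^ 2 < c} from rfl,
    ← Measure.map_apply_of_aemeasurable hX.aemeasurable hB, hX.map_eq_gaussianReal]
  exact fun h ↦ hB0 (gaussianReal_absolutelyContinuous' _ hv h)

lemma IndepFun.setIntegral_preimage_add_sq [IsFiniteMeasure μ] {S T : Ω → ℝ}
    (hST : IndepFun S T μ) (hSm : Measurable S) (hS : MemLp S 2 μ) (hT : MemLp T 2 μ)
    (hT0 : μ[T] = 0) {B : Set ℝ} (hB : MeasurableSet B) (a b : ℝ) :
    ∫ ω in S ⁻¹' B, (a * S ω + b * T ω) ^ 2 ∂μ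
      = a ^ 2 * ∫ ω in S ⁻¹' B, S ω ^ 2 ∂μ + b ^ 2 * Var[T; μ] * μ.real (S ⁻¹' B) := by
  have hTm : AEMeasurable T μ := hT.aestronglyMeasurable.aemeasurable
  have hcross : ∫ ω in S ⁻¹' B, S ω * T ω ∂μ = 0 := by
    rw [← integral_indicator (hSm hB)]
    calc ∫ ω, (S ⁻¹' B).indicator (fun ω ↦ S ω * T ω) ω ∂μ
        = ∫ ω, B.indicator id (S ω) * T ω ∂μ := by
          congr with ω
          by_cases h : S ω ∈ B <;> simp [h]
      _ = 0 := by
          have := hST.integral_fun_comp_mul_comp (g := id) hSm.aemeasurable hTm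
            (measurable_id.indicator hB).aestronglyMeasurable aestronglyMeasurable_id
          simpa [hT0] using this
  have hsq : ∫ ω in S ⁻¹' B, T ω ^ 2 ∂μ = μ.real (S ⁻¹' B) * Var[T; μ] := by
    rw [variance_of_integral_eq_zero hTm hT0]
    exact ((IndepFun_iff_Indep S T μ).1 hST).setIntegral_eq_mul hSm.comap_le hTm ⟨B, hB, rfl⟩
      (f := fun t ↦ t ^ 2) (by fun_prop)
  have hS2 : IntegrableOn (fun ω ↦ S ω ^ 2) (S ⁻¹' B) μ := hS.integrable_sq.integrableOn
  have hST' : IntegrableOn (fun ω ↦ S ω * T ω) (S ⁻¹' B) μ :=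
    (hS.integrable_mul hT).integrableOn
  have hT2 : IntegrableOn (fun ω ↦ T ω ^ 2) (S ⁻¹' B) μ := hT.integrable_sq.integrableOn
  calc ∫ ω in S ⁻¹' B, (a * S ω + b * T ω) ^ 2 ∂μ
      = ∫ ω in S ⁻¹' B, (a ^ 2 * S ω ^ 2 + 2 * a * b * (S ω * T ω) + b ^ 2 * T ω ^ 2) ∂μ := by
        congr with ω; ring
    _ = a ^ 2 * ∫ ω in S ⁻¹' B, S ω ^ 2 ∂μ + 2 * a * b * ∫ ω in S ⁻¹' B, S ω * T ω ∂μ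
          + b ^ 2 * ∫ ω in S ⁻¹' B, T ω ^ 2 ∂μ := by
        rw [integral_add, integral_add, integral_const_mul, integral_const_mul,
          integral_const_mul]
        exacts [hS2.const_mul _, hST'.const_mul _, (hS2.const_mul _).add (hST'.const_mul _),
          hT2.const_mul _]
    _ = _ := by rw [hcross, hsq]; ring

lemma IndepFun.tendsto_setIntegral_add_sq_div_measureReal [IsFiniteMeasure μ]
    {S T : Ω → ℝ} (hST : IndepFun S T μ) (hSm : Measurable S) (hS : MemLp S 2 μ)
    (hT : MemLp T 2 μ) (hT0 : μ[T] = 0) (hpos : ∀ c > 0, μ {ω | S ω ^ 2 < c} ≠ 0) (a b : ℝ) :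
    Tendsto (fun c : ℝ ↦ (∫ ω in {ω | S ω ^ 2 < c}, (a * S ω + b * T ω) ^ 2 ∂μ)
        / μ.real {ω | S ω ^ 2 < c}) (𝓝[>] 0) (𝓝 (b ^ 2 * Var[T; μ])) := by
  have hratio : ∀ c > 0, (∫ ω in {ω | S ω ^ 2 < c}, (a * S ω + b * T ω) ^ 2 ∂μ)
        / μ.real {ω | S ω ^ 2 < c}
      = a ^ 2 * ((∫ ω in {ω | S ω ^ 2 < c}, S ω ^ 2 ∂μ) / μ.real {ω | S ω ^ 2 < c})
        + b ^ 2 * Var[T; μ] := by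
    intro c hc
    have hD : μ.real (S ⁻¹' {x | x ^ 2 < c}) ≠ 0 :=
      (ENNReal.toReal_pos (hpos c hc) (measure_ne_top μ _)).ne'
    rw [show {ω | S ω ^ 2 < c} = S ⁻¹' {x | x ^ 2 < c} from rfl,
      hST.setIntegral_preimage_add_sq hSm hS hT hT0 (measurableSet_lt (by fun_prop) (by fun_prop)),
      add_div, mul_div_cancel_right₀ _ hD, mul_div_assoc]
  have hlim := ((tendsto_setIntegral_sq_div_measureReal_sq_lt (μ := μ) S).const_mul
    (a ^ 2)).add_const (b ^ 2 * Var[T; μ])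
  rw [mul_zero, zero_add] at hlim
  refine hlim.congr' ?_
  filter_upwards [self_mem_nhdsWithin] with c hc
  exact (hratio c hc).symm

end ProbabilityTheory

/-- For independent standard normals `Y₁, Y₂` and `α₁, α₂ > 0`,
`lim_{c ↓ 0} E(Y₁² ∣ (α₁Y₁ + α₂Y₂)² < c) = α₂²/(α₁² + α₂²)`. -/
theorem condExp_sq_given_weighted_sum_sq_lt_limit {Ω : Type*} [MeasurableSpace Ω]
    (μ : Measure Ω) [IsProbabilityMeasure μ]
    (Y₁ Y₂ : Ω → ℝ) (hY₁ : Measurable Y₁) (hY₂ : Measurable Y₂)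
    (hlaw₁ : μ.map Y₁ = gaussianReal 0 1) (hlaw₂ : μ.map Y₂ = gaussianReal 0 1)
    (hindep : IndepFun Y₁ Y₂ μ)
    (α₁ α₂ : ℝ) (hα₁ : 0 < α₁) (hα₂ : 0 < α₂) :
    Tendsto (fun c : ℝ =>
        (∫ ω in {ω | (α₁ * Y₁ ω + α₂ * Y₂ ω)^2 < c}, (Y₁ ω)^2 ∂μ) /
          (μ {ω | (α₁ * Y₁ ω + α₂ * Y₂ ω)^2 < c}).toReal)
      (nhdsWithin 0 (Set.Ioi 0)) (nhds (α₂^2 / (α₁^2 + α₂^2))) := by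
  have hG₁ : HasLaw Y₁ (gaussianReal 0 1) μ := ⟨hY₁.aemeasurable, hlaw₁⟩
  have hG₂ : HasLaw Y₂ (gaussianReal 0 1) μ := ⟨hY₂.aemeasurable, hlaw₂⟩
  have hVar₁ : Var[Y₁; μ] = 1 := by simp [hG₁.variance_eq]
  have hVar₂ : Var[Y₂; μ] = 1 := by simp [hG₂.variance_eq]
  have hL₁ := hG₁.hasGaussianLaw.memLp_two
  have hL₂ := hG₂.hasGaussianLaw.memLp_two
  set r := α₁ ^ 2 + α₂ ^ 2
  have hr : r ≠ 0 := by positivity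
  let S := fun ω ↦ α₁ * Y₁ ω + α₂ * Y₂ ω
  let T := fun ω ↦ α₂ * Y₁ ω + -α₁ * Y₂ ω
  have hST : IndepFun S T μ := hindep.indepFun_linComb_of_hasGaussianLaw hG₁.hasGaussianLaw
    hG₂.hasGaussianLaw (by rw [hVar₁, hVar₂]; ring)
  have hVar : ∀ a b : ℝ, Var[fun ω ↦ a * Y₁ ω + b * Y₂ ω; μ] = a ^ 2 + b ^ 2 := fun a b ↦ by
    rw [← covariance_self (by fun_prop), hindep.covariance_linComb hL₁ hL₂, hVar₁, hVar₂]; ring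
  have hT0 : μ[T] = 0 := by
    rw [integral_add ((hL₁.integrable one_le_two).const_mul _)
      ((hL₂.integrable one_le_two).const_mul _), integral_const_mul, integral_const_mul,
      hG₁.integral_eq, hG₂.integral_eq, integral_id_gaussianReal]
    ring
  have hpos : ∀ c > 0, μ {ω | S ω ^ 2 < c} ≠ 0 := fun c hc ↦
    ((hindep.hasGaussianLaw hG₁.hasGaussianLaw hG₂.hasGaussianLaw).prod_linComb α₁ α₂ α₂ (-α₁)).fst
      |>.measure_sq_lt_ne_zero (hVar α₁ α₂ ▸ hr) hc
  have h := hST.tendsto_setIntegral_add_sq_div_measureReal (by fun_prop)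
    (hL₁.const_mul _ |>.add (hL₂.const_mul _)) (hL₁.const_mul _ |>.add (hL₂.const_mul _)) hT0 hpos
    (α₁ / r) (α₂ / r)
  rw [hVar, neg_sq, add_comm (α₂ ^ 2), show (α₂ / r) ^ 2 * r = α₂ ^ 2 / r by field_simp] at h
  convert h using 6 with c ω
  · simp only [S, T]
    field_simp
    ring
  · rfl
end
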